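/- arXiv:1806.04739 — 3 statements merged into one kernel-verified Lean document; each statement's English description precedes it below -/
import Mathlib

section
/- A continuous function f on [0,1] belongs to ℋ if and only if there exists a continuous function g on [0,1] with g(1)=0 such that f(x) = x·g(x) for all x ∈ [0,1]; moreover in that case g is unique and ‖f‖_ℋ = sup_{x∈[0,1]} |g(x)|. -/
open Set

def InH (f : ℝ → ℝ) : Prop :=
  ContinuousOn f (Icc 0 1) ∧ f 0 = 0 ∧ f 1 = 0 ∧
    ∃ L : ℝ, HasDerivWithinAt f L (Icc 0 1) 0

noncomputable def Hnorm (f : ℝ → ℝ) : ℝ :=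
  sSup ((fun x => |f x / x|) '' Ioc (0:ℝ) 1)

/-! Carathéodory's description of a one-sided derivative: `f` is differentiable within `[0,1]` at
`0` iff `f x - f 0 = x • g x` with `g` continuous at `0`, and `g` is then the slope of `f` at `0`
completed by `g 0 = f'(0)`. Since `(0,1]` is dense in `[0,1]`, such a `g` is determined by `f`,
and the supremum of `|g|` over `[0,1]` equals its supremum over `(0,1]`, i.e. `‖f‖_ℋ`. -/

open Filter Topology Function

section Caratheodory

variable {𝕜 F : Type*} [NontriviallyNormedField 𝕜] [NormedAddCommGroup F] [NormedSpace 𝕜 F]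
  {f g : 𝕜 → F} {s : Set 𝕜} {a : 𝕜} {L : F}

theorem hasDerivWithinAt_of_sub_eq_sub_smul (hg : ContinuousWithinAt g s a)
    (hfg : ∀ x ∈ s, f x - f a = (x - a) • g x) : HasDerivWithinAt f (g a) s a := by
  rw [hasDerivWithinAt_iff_tendsto_slope]
  refine (hg.mono sdiff_subset).tendsto.congr' (eventually_nhdsWithin_of_forall fun x hx => ?_)
  rw [slope_def_module, hfg x hx.1, smul_smul,
    inv_mul_cancel₀ (sub_ne_zero.2 (mem_singleton_iff.not.1 hx.2)), one_smul]

theorem sub_eq_sub_smul_update_slope [DecidableEq 𝕜] (f : 𝕜 → F) (a : 𝕜) (L : F) (x : 𝕜) :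
    f x - f a = (x - a) • update (slope f a) a L x := by
  rcases eq_or_ne x a with rfl | hx
  · simp
  · rw [update_of_ne hx, sub_smul_slope, vsub_eq_sub]

theorem HasDerivWithinAt.continuousOn_update_slope [DecidableEq 𝕜]
    (hf : ContinuousOn f s) (hD : HasDerivWithinAt f L s a) :
    ContinuousOn (update (slope f a) a L) s := by
  intro x hx
  rcases eq_or_ne x a with rfl | hxa
  · exact continuousWithinAt_update_same.2 (hasDerivWithinAt_iff_tendsto_slope.1 hD)
  · rw [continuousWithinAt_update_of_ne hxa, slope_fun_def]
    exact ((continuousWithinAt_id.sub continuousWithinAt_const).inv₀ (sub_ne_zero.2 hxa)).smul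
      ((hf x hx).sub continuousWithinAt_const)

end Caratheodory

theorem ContinuousOn.csSup_image_of_subset_closure {X α : Type*} [TopologicalSpace X]
    [ConditionallyCompleteLattice α] [TopologicalSpace α] [ClosedIicTopology α]
    {h : X → α} {s t : Set X} (hh : ContinuousOn h t) (hst : s ⊆ t) (hts : t ⊆ closure s)
    (hs : s.Nonempty) (hbdd : BddAbove (h '' t)) : sSup (h '' s) = sSup (h '' t) := by
  have hdense : h '' t ⊆ closure (h '' s) := by
    rintro _ ⟨x, hx, rfl⟩
    exact ((hh x hx).mono hst).mem_closure_image (hts hx)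
  exact ((isLUB_iff_of_subset_of_subset_closure (image_mono hst) hdense).2
    (isLUB_csSup ((hs.mono hst).image h) hbdd)).csSup_eq (hs.image h)

theorem stmt1 (f : ℝ → ℝ) (hf : ContinuousOn f (Icc 0 1)) :
    (InH f ↔ ∃ g : ℝ → ℝ, ContinuousOn g (Icc 0 1) ∧ g 1 = 0 ∧
      ∀ x ∈ Icc (0:ℝ) 1, f x = x * g x) ∧
    (∀ g₁ g₂ : ℝ → ℝ, ContinuousOn g₁ (Icc 0 1) → ContinuousOn g₂ (Icc 0 1) →
      (∀ x ∈ Icc (0:ℝ) 1, f x = x * g₁ x) →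
      (∀ x ∈ Icc (0:ℝ) 1, f x = x * g₂ x) →
      ∀ x ∈ Icc (0:ℝ) 1, g₁ x = g₂ x) ∧
    (∀ g : ℝ → ℝ, ContinuousOn g (Icc 0 1) → g 1 = 0 →
      (∀ x ∈ Icc (0:ℝ) 1, f x = x * g x) →
      Hnorm f = sSup ((fun x => |g x|) '' Icc (0:ℝ) 1)) := by
  have hIoc_dense : Icc (0:ℝ) 1 ⊆ closure (Ioc 0 1) := (closure_Ioc zero_ne_one).ge
  have hdiv : ∀ g : ℝ → ℝ, (∀ x ∈ Icc (0:ℝ) 1, f x = x * g x) →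
      EqOn (fun x => f x / x) g (Ioc 0 1) :=
    fun g hfg x hx => by
      dsimp only
      rw [hfg x (Ioc_subset_Icc_self hx), mul_div_cancel_left₀ _ hx.1.ne']
  refine ⟨⟨?_, ?_⟩, ?_, ?_⟩
  · rintro ⟨-, hf0, hf1, L, hD⟩
    refine ⟨_, hD.continuousOn_update_slope hf, ?_, fun x _ => ?_⟩
    · simpa [hf0, hf1] using (sub_eq_sub_smul_update_slope f 0 L 1).symm
    · simpa [hf0] using sub_eq_sub_smul_update_slope f 0 L x
  · rintro ⟨g, hg, hg1, hfg⟩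
    refine ⟨hf, by simpa using hfg 0 (left_mem_Icc.2 zero_le_one),
      by simpa [hg1] using hfg 1 (right_mem_Icc.2 zero_le_one), g 0, ?_⟩
    exact hasDerivWithinAt_of_sub_eq_sub_smul (hg 0 (left_mem_Icc.2 zero_le_one))
      fun x hx => by simp [hfg x hx, hfg 0 (left_mem_Icc.2 zero_le_one)]
  · intro g₁ g₂ hg₁ hg₂ hfg₁ hfg₂
    exact ((hdiv g₁ hfg₁).symm.trans (hdiv g₂ hfg₂)).of_subset_closure hg₁ hg₂
      Ioc_subset_Icc_self hIoc_dense
  · intro g hg _ hfg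
    rw [Hnorm, image_congr fun x hx => congrArg abs (hdiv g hfg hx)]
    exact hg.abs.csSup_image_of_subset_closure Ioc_subset_Icc_self hIoc_dense
      (nonempty_Ioc.2 zero_lt_one) (isCompact_Icc.image_of_continuousOn hg.abs).bddAbove
end

section
/- The normed space (ℋ, ‖·‖_ℋ) is a Banach space, i.e. it is complete. -/
/-!
Dividing by `x` and filling in `h'(0)` at the origin maps `ℋ` isometrically into `C([0,1])` with
the sup norm. A Cauchy sequence `fₙ` in `ℋ` thus gives a uniformly Cauchy sequence of continuous
functions `fₙ x / x`, whose uniform limit `φ` is continuous with `φ 1 = 0`. Then `g x = x * φ x`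
lies in `ℋ` (with `g'(0) = φ 0`), and `‖fₙ - g‖_ℋ = sup |fₙ x / x - φ x| → 0`.
-/

open Set Filter Topology

noncomputable def divByX (h : ℝ → ℝ) (x : ℝ) : ℝ :=
  if x = 0 then derivWithin h (Icc 0 1) 0 else h x / x

lemma divByX_of_ne_zero (h : ℝ → ℝ) {x : ℝ} (hx : x ≠ 0) : divByX h x = h x / x := if_neg hx

lemma InH.sub {f g : ℝ → ℝ} (hf : InH f) (hg : InH g) : InH (fun x => f x - g x) := by
  obtain ⟨hfc, hf0, hf1, Lf, hfd⟩ := hf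
  obtain ⟨hgc, hg0, hg1, Lg, hgd⟩ := hg
  exact ⟨hfc.sub hgc, by simp [hf0, hg0], by simp [hf1, hg1], Lf - Lg, hfd.sub hgd⟩

lemma InH.continuousOn_divByX {h : ℝ → ℝ} (hH : InH h) : ContinuousOn (divByX h) (Icc 0 1) := by
  obtain ⟨hc, h0, -, L, hd⟩ := hH
  intro x hx
  rcases eq_or_ne x 0 with rfl | hx0
  · rw [← continuousWithinAt_sdiff_self, ContinuousWithinAt, divByX, if_pos rfl]
    have hslope := hasDerivWithinAt_iff_tendsto_slope.mp hd.differentiableWithinAt.hasDerivWithinAt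
    refine hslope.congr' ?_
    filter_upwards [self_mem_nhdsWithin] with y hy
    simp [divByX_of_ne_zero h hy.2, slope, h0, div_eq_inv_mul]
  · refine ((hc x hx).div continuousWithinAt_id hx0).congr_of_eventuallyEq ?_
      (divByX_of_ne_zero h hx0)
    filter_upwards [nhdsWithin_le_nhds (isOpen_ne.mem_nhds hx0)] with y hy
    exact divByX_of_ne_zero h hy

lemma InH.abs_div_le_Hnorm {h : ℝ → ℝ} (hH : InH h) {x : ℝ} (hx : x ∈ Ioc 0 1) :
    |h x / x| ≤ Hnorm h := by
  refine le_csSup ?_ (mem_image_of_mem _ hx)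
  obtain ⟨C, hC⟩ := isCompact_Icc.exists_bound_of_continuousOn hH.continuousOn_divByX
  refine ⟨C, ?_⟩
  rintro - ⟨y, hy, rfl⟩
  simpa only [divByX_of_ne_zero h hy.1.ne', Real.norm_eq_abs] using hC y (Ioc_subset_Icc_self hy)

lemma Hnorm_le {h : ℝ → ℝ} {C : ℝ} (hC : 0 ≤ C) (hb : ∀ x ∈ Ioc (0:ℝ) 1, |h x / x| ≤ C) :
    Hnorm h ≤ C :=
  Real.sSup_le (by rintro - ⟨x, hx, rfl⟩; exact hb x hx) hC

lemma InH.dist_divByX_le_Hnorm {f g : ℝ → ℝ} (hf : InH f) (hg : InH g) {x : ℝ}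
    (hx : x ∈ Icc 0 1) : dist (divByX f x) (divByX g x) ≤ Hnorm (fun x => f x - g x) := by
  rw [Real.dist_eq]
  refine ContinuousWithinAt.closure_le (f := fun y => |divByX f y - divByX g y|)
    ((closure_Ioc (zero_ne_one (α := ℝ))).symm ▸ hx) ?_ continuousWithinAt_const fun y hy => ?_
  · exact ((hf.continuousOn_divByX.sub hg.continuousOn_divByX).abs x hx).mono Ioc_subset_Icc_self
  · rw [divByX_of_ne_zero f hy.1.ne', divByX_of_ne_zero g hy.1.ne', ← sub_div]
    exact (hf.sub hg).abs_div_le_Hnorm hy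

lemma hasDerivWithinAt_id_mul_of_continuousWithinAt {φ : ℝ → ℝ} {s : Set ℝ}
    (hφ : ContinuousWithinAt φ s 0) : HasDerivWithinAt (fun x => x * φ x) (φ 0) s 0 := by
  rw [hasDerivWithinAt_iff_tendsto_slope]
  refine (hφ.mono sdiff_subset).tendsto.congr' ?_
  filter_upwards [self_mem_nhdsWithin] with y hy
  simp [slope, inv_mul_cancel_left₀ (show y ≠ 0 from hy.2)]

lemma inH_id_mul {φ : ℝ → ℝ} (hφ : ContinuousOn φ (Icc 0 1)) (h1 : φ 1 = 0) :
    InH (fun x => x * φ x) :=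
  ⟨continuousOn_id.mul hφ, zero_mul _, by simp [h1], φ 0,
    hasDerivWithinAt_id_mul_of_continuousWithinAt (hφ 0 ⟨le_rfl, zero_le_one⟩)⟩

lemma UniformCauchySeqOn.tendstoUniformlyOn_limUnder {ι α β : Type*} [Nonempty ι]
    [SemilatticeSup ι] [UniformSpace β] [CompleteSpace β] [Nonempty β] {F : ι → α → β} {s : Set α}
    (hF : UniformCauchySeqOn F atTop s) :
    TendstoUniformlyOn F (fun x => limUnder atTop (F · x)) atTop s :=
  hF.tendstoUniformlyOn_of_tendsto fun _ hx => (hF.cauchySeq hx).tendsto_limUnder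

theorem stmt2 (f : ℕ → ℝ → ℝ) (hf : ∀ n, InH (f n))
    (hcauchy : ∀ ε > 0, ∃ N : ℕ, ∀ m ≥ N, ∀ n ≥ N,
      Hnorm (fun x => f m x - f n x) < ε) :
    ∃ g : ℝ → ℝ, InH g ∧ ∀ ε > 0, ∃ N : ℕ, ∀ n ≥ N,
      Hnorm (fun x => f n x - g x) < ε := by
  have hunif : UniformCauchySeqOn (fun n => divByX (f n)) atTop (Icc 0 1) :=
    Metric.uniformCauchySeqOn_iff.mpr fun ε hε => (hcauchy ε hε).imp fun _ hN m hm n hn _ hx =>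
      ((hf m).dist_divByX_le_Hnorm (hf n) hx).trans_lt (hN m hm n hn)
  set φ := fun x => limUnder atTop (fun n => divByX (f n) x)
  have hlim : TendstoUniformlyOn (fun n => divByX (f n)) φ atTop (Icc 0 1) :=
    hunif.tendstoUniformlyOn_limUnder
  have hφ : ContinuousOn φ (Icc 0 1) :=
    hlim.continuousOn (Frequently.of_forall fun n => (hf n).continuousOn_divByX)
  have hφ1 : φ 1 = 0 := by
    simp only [φ, divByX_of_ne_zero _ one_ne_zero, (hf _).2.2.1, div_one]
    exact tendsto_const_nhds.limUnder_eq
  refine ⟨fun x => x * φ x, inH_id_mul hφ hφ1, fun ε hε => ?_⟩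
  obtain ⟨N, hN⟩ :=
    eventually_atTop.mp (Metric.tendstoUniformlyOn_iff.mp hlim (ε / 2) (half_pos hε))
  refine ⟨N, fun n hn => (Hnorm_le (half_pos hε).le fun x hx => ?_).trans_lt (half_lt_self hε)⟩
  rw [sub_div, mul_div_cancel_left₀ _ hx.1.ne', ← divByX_of_ne_zero _ hx.1.ne', abs_sub_comm,
    ← Real.dist_eq]
  exact (hN n hn x (Ioc_subset_Icc_self hx)).le
end

section
/- Let J(t,x,y) := (4πt)^{−1/2}[exp(−(x−y)²/(4t)) − exp(−(x+y)²/(4t))] for t > 0. Then there exists a constant C > 0 such that for every t > 0 and every x ∈ (0,1], ∫₀¹ (1/x)·J(t,x,y) dy ≤ C/√t. -/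
/-!
`Jker t x y` is the heat kernel `p t x y = (4πt)^{-1/2} exp(-(x-y)²/4t)` minus its mirror image
`p t (-x) y`. If `x ≥ √t`, bound `J ≤ p`, whose integral is at most one, so the left side is at
most `1/x ≤ 1/√t`. If `x < √t`, the inequality `1 - e^{-u} ≤ u` with `u = xy/t` gives
`J ≤ (xy/t) p`. Split `y = x + (y - x)`: the first part integrates to at most `x`, and the
second is an exact derivative, `(y - x) p = -2t ∂_y p`, so it integrates to at most
`2t/√(4πt) ≤ √t`. Hence the left side is at most `(x + √t)/t ≤ 2/√t`.
-/

noncomputable def Jker (t x y : ℝ) : ℝ :=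
  (Real.sqrt (4 * Real.pi * t))⁻¹ *
    (Real.exp (-(x - y) ^ 2 / (4 * t)) - Real.exp (-(x + y) ^ 2 / (4 * t)))

open MeasureTheory Real ProbabilityTheory

lemma exp_neg_sub_exp_neg_le (a b : ℝ) : exp (-a) - exp (-b) ≤ (b - a) * exp (-a) := by
  have h := one_sub_le_exp_neg (b - a)
  have : exp (-b) = exp (-(b - a)) * exp (-a) := by rw [← exp_add]; ring_nf
  rw [this]
  nlinarith [exp_pos (-a)]

noncomputable def heatKernel (t x y : ℝ) : ℝ :=
  (√(4 * π * t))⁻¹ * exp (-(x - y) ^ 2 / (4 * t))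

section

variable {t x y a b : ℝ}

lemma Jker_eq_heatKernel_sub : Jker t x y = heatKernel t x y - heatKernel t (-x) y := by
  rw [Jker, heatKernel, heatKernel, mul_sub]
  ring_nf

lemma heatKernel_nonneg : 0 ≤ heatKernel t x y := by
  unfold heatKernel; positivity

lemma heatKernel_le_inv_sqrt (ht : 0 ≤ t) : heatKernel t x y ≤ (√(4 * π * t))⁻¹ := by
  refine mul_le_of_le_one_right (by positivity) (exp_le_one_iff.2 ?_)
  rw [neg_div]
  exact neg_nonpos.2 (by positivity)

@[fun_prop]
lemma continuous_heatKernel : Continuous (heatKernel t x) := by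
  unfold heatKernel; fun_prop

lemma continuous_Jker : Continuous (Jker t x) := by
  unfold Jker; fun_prop

lemma heatKernel_eq_gaussianPDFReal (ht : 0 ≤ t) :
    heatKernel t x = gaussianPDFReal x (2 * t).toNNReal := by
  ext y
  rw [heatKernel, gaussianPDFReal, Real.coe_toNNReal _ (by positivity)]
  ring_nf

lemma integral_heatKernel_le_one (ht : 0 < t) (hab : a ≤ b) :
    ∫ y in a..b, heatKernel t x y ≤ 1 := by
  have hv : (2 * t).toNNReal ≠ 0 := by simpa using ht
  rw [intervalIntegral.integral_of_le hab, heatKernel_eq_gaussianPDFReal ht.le,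
    ← integral_gaussianPDFReal_eq_one x hv]
  exact setIntegral_le_integral (integrable_gaussianPDFReal _ _)
    (.of_forall fun _ => gaussianPDFReal_nonneg _ _ _)

lemma hasDerivAt_heatKernel :
    HasDerivAt (heatKernel t x) ((x - y) / (2 * t) * heatKernel t x y) y := by
  have h := ((((hasDerivAt_id y).const_sub x).pow 2).neg.div_const (4 * t)).exp.const_mul
    (√(4 * π * t))⁻¹
  refine h.congr_deriv ?_
  simp only [heatKernel, id, Pi.pow_apply, Pi.neg_apply]
  ring

lemma integral_sub_mul_heatKernel_le (ht : 0 < t) :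
    ∫ y in a..b, (y - x) * heatKernel t x y ≤ √t := by
  have hderiv (y : ℝ) : HasDerivAt (fun y => -(2 * t) * heatKernel t x y)
      ((y - x) * heatKernel t x y) y := by
    refine (hasDerivAt_heatKernel.const_mul _).congr_deriv ?_
    field_simp
    ring
  rw [intervalIntegral.integral_eq_sub_of_hasDerivAt (fun y _ => hderiv y)
    ((by fun_prop : Continuous fun y => (y - x) * heatKernel t x y).intervalIntegrable _ _)]
  have hsqrt : 2 * √t ≤ √(4 * π * t) := by
    rw [show 4 * π * t = 2 ^ 2 * (π * t) by ring, sqrt_mul (by positivity), sqrt_sq two_pos.le]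
    gcongr
    nlinarith [pi_gt_three]
  have h2t : 2 * t * (√(4 * π * t))⁻¹ ≤ √t := by
    rw [← div_eq_mul_inv, div_le_iff₀ (by positivity)]
    nlinarith [mul_self_sqrt ht.le, sqrt_nonneg t]
  nlinarith [heatKernel_nonneg (t := t) (x := x) (y := b),
    heatKernel_le_inv_sqrt (x := x) (y := a) ht.le]

lemma Jker_le_heatKernel : Jker t x y ≤ heatKernel t x y := by
  rw [Jker_eq_heatKernel_sub]
  linarith [heatKernel_nonneg (t := t) (x := -x) (y := y)]

lemma Jker_le_mul_heatKernel (ht : t ≠ 0) : Jker t x y ≤ x * y / t * heatKernel t x y := by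
  have hdiff : (x + y) ^ 2 / (4 * t) - (x - y) ^ 2 / (4 * t) = x * y / t := by
    field_simp
    ring
  have h := exp_neg_sub_exp_neg_le ((x - y) ^ 2 / (4 * t)) ((x + y) ^ 2 / (4 * t))
  rw [hdiff, ← neg_div, ← neg_div] at h
  rw [Jker, heatKernel, mul_left_comm]
  exact mul_le_mul_of_nonneg_left h (by positivity)

lemma integral_Jker_le_one (ht : 0 < t) (hab : a ≤ b) : ∫ y in a..b, Jker t x y ≤ 1 :=
  (intervalIntegral.integral_mono hab (continuous_Jker.intervalIntegrable _ _)
    (continuous_heatKernel.intervalIntegrable _ _) fun _ => Jker_le_heatKernel).trans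
    (integral_heatKernel_le_one ht hab)

lemma integral_Jker_le (ht : 0 < t) (hx : 0 ≤ x) (hab : a ≤ b) :
    ∫ y in a..b, Jker t x y ≤ x / t * (x + √t) := by
  calc ∫ y in a..b, Jker t x y
      ≤ ∫ y in a..b, x / t * (x * heatKernel t x y + (y - x) * heatKernel t x y) := by
        refine intervalIntegral.integral_mono hab (continuous_Jker.intervalIntegrable _ _)
          ((by fun_prop : Continuous _).intervalIntegrable _ _) fun y => ?_
        convert Jker_le_mul_heatKernel ht.ne' using 1
        ring
    _ = x / t * (x * ∫ y in a..b, heatKernel t x y) +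
          x / t * ∫ y in a..b, (y - x) * heatKernel t x y := by
        rw [intervalIntegral.integral_const_mul,
          intervalIntegral.integral_add ((continuous_heatKernel.intervalIntegrable _ _).const_mul x)
            ((by fun_prop : Continuous fun y => (y - x) * heatKernel t x y).intervalIntegrable _ _),
          intervalIntegral.integral_const_mul, mul_add]
    _ ≤ x / t * (x * 1) + x / t * √t := by
        gcongr
        exacts [integral_heatKernel_le_one ht hab, integral_sub_mul_heatKernel_le ht]
    _ = x / t * (x + √t) := by ring

end

theorem stmt8 : ∃ C > 0, ∀ t > 0, ∀ x ∈ Set.Ioc (0:ℝ) 1,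
    (∫ y in (0:ℝ)..1, (1 / x) * Jker t x y) ≤ C / Real.sqrt t := by
  refine ⟨2, two_pos, fun t ht x ⟨hx, _⟩ => ?_⟩
  have hst : 0 < √t := sqrt_pos.2 ht
  rw [intervalIntegral.integral_const_mul]
  rcases le_or_gt √t x with hxt | hxt
  · calc 1 / x * ∫ y in (0:ℝ)..1, Jker t x y ≤ 1 / x * 1 := by
          gcongr
          exact integral_Jker_le_one ht zero_le_one
      _ ≤ 1 / √t := by rw [mul_one]; gcongr
      _ ≤ 2 / √t := by gcongr; norm_num
  · calc 1 / x * ∫ y in (0:ℝ)..1, Jker t x y ≤ 1 / x * (x / t * (x + √t)) := by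
          gcongr
          exact integral_Jker_le ht hx.le zero_le_one
      _ = (x + √t) / t := by field_simp
      _ ≤ (√t + √t) / t := by gcongr
      _ = 2 / √t := by
          rw [div_eq_div_iff ht.ne' hst.ne']
          linear_combination 2 * mul_self_sqrt ht.le
end
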